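/- Let (m_x) be i.i.d. random variables with values in [m_min, m_max], 0 < m_min, and fix β₁,…,β_n > 0. For every n ≥ 2, all admissible indices x, y, and all nonnegative integers k, k' with k + k' < 2|x − y| − 2, one has Cov( ⟨δ_x, (A_r^β)^k δ_x⟩ , ⟨δ_y, (A_r^β)^{k'} δ_y⟩ ) = 0 (for 1 ≤ x, y ≤ n−1) and Cov( ⟨δ_x, (A_p^β)^k δ_x⟩ , ⟨δ_y, (A_r^β)^{k'} δ_y⟩ ) = 0 (for 1 ≤ x ≤ n, 1 ≤ y ≤ n−1), where A_p^β and A_r^β are built from the random masses m₁,…,m_n and Cov(X,Y) = E[XY] − E[X]E[Y]. -/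

import Mathlib

open Matrix MeasureTheory ProbabilityTheory Filter

noncomputable section

/-- The discrete gradient `∇₋` (an `n × (n−1)` matrix, 0-indexed). -/
def nablaMinus (n : ℕ) : Matrix (Fin n) (Fin (n-1)) ℝ :=
  Matrix.of fun x y => if (x : ℕ) = (y : ℕ) then 1 else if (x : ℕ) = (y : ℕ) + 1 then -1 else 0

/-- The discrete gradient `∇₊ = −(∇₋)ᵀ`. -/
def nablaPlus (n : ℕ) : Matrix (Fin (n-1)) (Fin n) ℝ := -(nablaMinus n)ᵀ

/-- `M^{-1/2}` for the diagonal mass matrix. -/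
def invSqrtMass (n : ℕ) (m : Fin n → ℝ) : Matrix (Fin n) (Fin n) ℝ :=
  Matrix.diagonal fun x => 1 / Real.sqrt (m x)

/-- `M⁻¹`. -/
def massInv (n : ℕ) (m : Fin n → ℝ) : Matrix (Fin n) (Fin n) ℝ :=
  Matrix.diagonal fun x => (m x)⁻¹

/-- `A_p⁰ = M^{-1/2} (−Δ) M^{-1/2}` with `Δ = ∇₋∇₊`. -/
def Ap0 (n : ℕ) (m : Fin n → ℝ) : Matrix (Fin n) (Fin n) ℝ :=
  invSqrtMass n m * (-(nablaMinus n * nablaPlus n)) * invSqrtMass n m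

/-- `A_r⁰ = −∇₊ M⁻¹ ∇₋`. -/
def Ar0 (n : ℕ) (m : Fin n → ℝ) : Matrix (Fin (n-1)) (Fin (n-1)) ℝ :=
  -(nablaPlus n * massInv n m * nablaMinus n)

/-- `M_β^{-1/2} = diag(√(β_x/m_x))`. -/
def MbetaInvSqrt (n : ℕ) (m β : Fin n → ℝ) : Matrix (Fin n) (Fin n) ℝ :=
  Matrix.diagonal fun x => Real.sqrt (β x / m x)

/-- `M_β⁻¹ = diag(β_x/m_x)`. -/
def MbetaInv (n : ℕ) (m β : Fin n → ℝ) : Matrix (Fin n) (Fin n) ℝ :=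
  Matrix.diagonal fun x => β x / m x

/-- `β° = diag(β₁,…,β_{n−1})`. -/
def betaCirc (n : ℕ) (β : Fin n → ℝ) : Matrix (Fin (n-1)) (Fin (n-1)) ℝ :=
  Matrix.diagonal fun y => β (Fin.castLE (Nat.sub_le n 1) y)

/-- `(β°)^{1/2}`. -/
def betaCircSqrt (n : ℕ) (β : Fin n → ℝ) : Matrix (Fin (n-1)) (Fin (n-1)) ℝ :=
  Matrix.diagonal fun y => Real.sqrt (β (Fin.castLE (Nat.sub_le n 1) y))

/-- `A_p^β = M_β^{-1/2} (−∇₋ β° ∇₊) M_β^{-1/2}`. -/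
def ApBeta (n : ℕ) (m β : Fin n → ℝ) : Matrix (Fin n) (Fin n) ℝ :=
  MbetaInvSqrt n m β * (-(nablaMinus n * betaCirc n β * nablaPlus n)) * MbetaInvSqrt n m β

/-- `A_r^β = (β°)^{1/2} (−∇₊ M_β⁻¹ ∇₋) (β°)^{1/2}`. -/
def ArBeta (n : ℕ) (m β : Fin n → ℝ) : Matrix (Fin (n-1)) (Fin (n-1)) ℝ :=
  betaCircSqrt n β * (-(nablaPlus n * MbetaInv n m β * nablaMinus n)) * betaCircSqrt n β

/-- The function `𝔣(t) = √t coth √t` for `t > 0`, `𝔣(0) = 1`. -/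
def sqrtCoth (t : ℝ) : ℝ :=
  if t = 0 then 1 else Real.sqrt t * (Real.cosh (Real.sqrt t) / Real.sinh (Real.sqrt t))

/-- The (random) average thermal energy at site `x` (0-indexed; site `x+1` in the paper's
1-based convention), given masses `m` and local inverse temperatures `βv`.  The `A_r^β` term
is omitted at the last site. -/
def avgThermalEnergy (n : ℕ) (m βv : Fin n → ℝ) (x : Fin n) : ℝ :=
  (1 / βv x) *
    ((if h : (x : ℕ) < n - 1 then cfc sqrtCoth (ArBeta n m βv) ⟨(x : ℕ), h⟩ ⟨(x : ℕ), h⟩ else 0)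
      + cfc sqrtCoth (ApBeta n m βv) x x
      - (m x / βv x) / (∑ z, m z / βv z))

/-- The local inverse-temperature vector `β_x = β(x/n)` (1-based sites). -/
def betaVec (n : ℕ) (β : ℝ → ℝ) : Fin n → ℝ := fun x => β ((((x : ℕ) : ℝ) + 1) / n)

/-- Average thermal energy at site `x` built from a macroscopic temperature profile `β`. -/
def avgThermalProfile (n : ℕ) (β : ℝ → ℝ) (m : Fin n → ℝ) (x : Fin n) : ℝ :=
  avgThermalEnergy n m (betaVec n β) x

/-- The 0-based index in `Fin n` of the (1-based) site `max 1 k` (clamped to stay in range). -/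
def siteIdx (n : ℕ) (hn : 0 < n) (k : ℕ) : Fin n := ⟨min (max 1 k - 1) (n-1), by omega⟩

end


/-!
`A_r^β` and `A_p^β` are tridiagonal, and the entry `(a, b)` of either involves only the masses
at `a, a + 1, b, b + 1`. Expanding `⟨δ_x, A^k δ_x⟩` as a sum over nearest-neighbour walks of
length `k` from `x` back to `x`, it depends only on the masses within distance `k / 2 + 1` of `x`.
When `k + k' < 2|x − y| − 2` the two sets of masses are disjoint, so the two diagonal entries are
functions of independent families of masses and their covariance vanishes.
-/

section Tridiagonal

variable {N : ℕ} {R : Type*} [Semiring R]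

def IsTridiagonal (A : Matrix (Fin N) (Fin N) R) : Prop :=
  ∀ a b : Fin N, 1 < Nat.dist a b → A a b = 0

/-- The indices visited by some nearest-neighbour walk of length `k` from `a` to `b`. -/
def walkSites (k : ℕ) (a b : Fin N) : Set (Fin N) :=
  {c | Nat.dist a c + Nat.dist c b ≤ k}

theorem mem_walkSites {k : ℕ} {a b c : Fin N} :
    c ∈ walkSites k a b ↔ Nat.dist a c + Nat.dist c b ≤ k :=
  Iff.rfl

theorem IsTridiagonal.pow_apply_eq_zero {A : Matrix (Fin N) (Fin N) R} (hA : IsTridiagonal A) :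
    ∀ {k : ℕ} {a b : Fin N}, k < Nat.dist a b → (A ^ k) a b = 0
  | 0, a, b, h => Matrix.one_apply_ne (by rintro rfl; simp at h)
  | k + 1, a, b, h => by
    rw [pow_succ', Matrix.mul_apply]
    refine Finset.sum_eq_zero fun c _ => ?_
    by_cases hac : 1 < Nat.dist a c
    · rw [hA a c hac, zero_mul]
    · rw [hA.pow_apply_eq_zero (k := k) (by simp only [Nat.dist] at h hac ⊢; omega), mul_zero]

theorem dependsOn_pow_apply {ι α : Type*} {A : (ι → α) → Matrix (Fin N) (Fin N) R}
    (σ : Fin N → Set ι) (hA : ∀ m, IsTridiagonal (A m))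
    (hσ : ∀ a b, DependsOn (fun m => A m a b) (σ a ∪ σ b)) :
    ∀ (k : ℕ) (a b : Fin N), DependsOn (fun m => (A m ^ k) a b) (⋃ c ∈ walkSites k a b, σ c)
  | 0, _, _ => fun _ _ _ => rfl
  | k + 1, a, b => by
    intro m m' h
    simp only [pow_succ', Matrix.mul_apply]
    refine Finset.sum_congr rfl fun c _ => ?_
    by_cases hac : 1 < Nat.dist a c
    · rw [hA m a c hac, hA m' a c hac, zero_mul, zero_mul]
    by_cases hcb : k < Nat.dist c b
    · rw [(hA m).pow_apply_eq_zero hcb, (hA m').pow_apply_eq_zero hcb, mul_zero, mul_zero]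
    have ha : a ∈ walkSites (k + 1) a b := by
      simp only [mem_walkSites, Nat.dist] at hac hcb ⊢; omega
    have hc : c ∈ walkSites (k + 1) a b := by
      simp only [mem_walkSites, Nat.dist] at hac hcb ⊢; omega
    have hwalk : walkSites k c b ⊆ walkSites (k + 1) a b := fun d hd => by
      simp only [mem_walkSites, Nat.dist] at hac hd ⊢; omega
    have hstep : A m a c = A m' a c :=
      (hσ a c).mono (Set.union_subset (Set.subset_biUnion_of_mem ha)
        (Set.subset_biUnion_of_mem hc)) h
    have hrest : (A m ^ k) c b = (A m' ^ k) c b :=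
      (dependsOn_pow_apply σ hA hσ k c b).mono (Set.biUnion_subset_biUnion_left hwalk) h
    rw [hstep, hrest]

theorem measurable_pow_apply {X : Type*} [MeasurableSpace X] [MeasurableSpace R]
    [MeasurableAdd₂ R] [MeasurableMul₂ R] {A : X → Matrix (Fin N) (Fin N) R}
    (hA : ∀ a b, Measurable fun x => A x a b) :
    ∀ (k : ℕ) (a b : Fin N), Measurable fun x => (A x ^ k) a b
  | 0, _, _ => by simpa only [pow_zero] using measurable_const
  | k + 1, a, b => by
    simp only [pow_succ, Matrix.mul_apply]
    exact Finset.measurable_sum _ fun c _ => (measurable_pow_apply hA k a c).mul (hA c b)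

end Tridiagonal

theorem integral_mul_eq_mul_integral_of_dependsOn {Ω ι : Type*} [MeasurableSpace Ω]
    {μ : Measure Ω} [Finite ι] {X : ι → Ω → ℝ} (hX : ∀ i, Measurable (X i))
    (hindep : iIndepFun X μ) {f g : (ι → ℝ) → ℝ} (hf : Measurable f) (hg : Measurable g)
    {S T : Set ι} (hST : Disjoint S T) (hfS : DependsOn f S) (hgT : DependsOn g T) :
    ∫ ω, f (X · ω) * g (X · ω) ∂μ = (∫ ω, f (X · ω) ∂μ) * ∫ ω, g (X · ω) ∂μ := by
  classical
  obtain ⟨S, rfl⟩ := (Set.toFinite S).exists_finset_coe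
  obtain ⟨T, rfl⟩ := (Set.toFinite T).exists_finset_coe
  set F := fun v : S → ℝ => f (Function.updateFinset 0 S v)
  set G := fun v : T → ℝ => g (Function.updateFinset 0 T v)
  have hFf : ∀ ω, f (X · ω) = F fun i => X i ω := fun ω =>
    hfS fun i hi => by simp [Function.updateFinset, Finset.mem_coe.mp hi]
  have hGg : ∀ ω, g (X · ω) = G fun i => X i ω := fun ω =>
    hgT fun i hi => by simp [Function.updateFinset, Finset.mem_coe.mp hi]
  have hF : Measurable F := hf.comp measurable_updateFinset
  have hG : Measurable G := hg.comp measurable_updateFinset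
  simp only [hFf, hGg]
  exact ((hindep.indepFun_finset S T (Finset.disjoint_coe.mp hST) hX).comp hF hG)
    |>.integral_fun_mul_eq_mul_integral
      (hF.comp (measurable_pi_lambda _ fun i => hX i)).aestronglyMeasurable
      (hG.comp (measurable_pi_lambda _ fun i => hX i)).aestronglyMeasurable

section Chain

variable {n : ℕ}

/-- The index `c` of `A_r^β` is the spring joining the masses `c` and `c + 1`. -/
def bond (c : ℕ) : Set (Fin n) := {z | (z : ℕ) = c ∨ (z : ℕ) = c + 1}

theorem mem_bond_of_nablaMinus_ne_zero {z : Fin n} {a : Fin (n - 1)} (h : nablaMinus n z a ≠ 0) :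
    z ∈ bond a := by
  simp only [nablaMinus, Matrix.of_apply] at h
  split_ifs at h with h1 h2
  exacts [Or.inl h1, Or.inr h2, absurd rfl h]

theorem ArBeta_apply (m β : Fin n → ℝ) (a b : Fin (n - 1)) :
    ArBeta n m β a b = Real.sqrt (β (Fin.castLE (Nat.sub_le n 1) a)) *
      (∑ z : Fin n, nablaMinus n z a * (β z / m z) * nablaMinus n z b) *
      Real.sqrt (β (Fin.castLE (Nat.sub_le n 1) b)) := by
  simp [ArBeta, betaCircSqrt, MbetaInv, nablaPlus, Matrix.mul_apply, Matrix.diagonal,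
    Finset.mul_sum, Finset.sum_mul]

theorem ApBeta_apply (m β : Fin n → ℝ) (a b : Fin n) :
    ApBeta n m β a b = Real.sqrt (β a / m a) *
      (∑ y : Fin (n - 1), nablaMinus n a y * β (Fin.castLE (Nat.sub_le n 1) y) * nablaMinus n b y) *
      Real.sqrt (β b / m b) := by
  simp [ApBeta, betaCirc, MbetaInvSqrt, nablaPlus, Matrix.mul_apply, Matrix.diagonal,
    Finset.mul_sum, Finset.sum_mul]

variable (β : Fin n → ℝ)

theorem ArBeta_isTridiagonal (m : Fin n → ℝ) : IsTridiagonal (ArBeta n m β) := by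
  intro a b hab
  rw [ArBeta_apply, Finset.sum_eq_zero, mul_zero, zero_mul]
  intro z _
  by_contra hne
  have ha := mem_bond_of_nablaMinus_ne_zero (left_ne_zero_of_mul (left_ne_zero_of_mul hne))
  have hb := mem_bond_of_nablaMinus_ne_zero (right_ne_zero_of_mul hne)
  simp only [bond, Nat.dist, Set.mem_ofPred_eq] at ha hb hab
  omega

theorem ApBeta_isTridiagonal (m : Fin n → ℝ) : IsTridiagonal (ApBeta n m β) := by
  intro a b hab
  rw [ApBeta_apply, Finset.sum_eq_zero, mul_zero, zero_mul]
  intro y _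
  by_contra hne
  have ha := mem_bond_of_nablaMinus_ne_zero (left_ne_zero_of_mul (left_ne_zero_of_mul hne))
  have hb := mem_bond_of_nablaMinus_ne_zero (right_ne_zero_of_mul hne)
  simp only [bond, Nat.dist, Set.mem_ofPred_eq] at ha hb hab
  omega

theorem dependsOn_ArBeta_apply (a b : Fin (n - 1)) :
    DependsOn (fun m => ArBeta n m β a b) (bond a ∪ bond b) := by
  intro m m' h
  simp only [ArBeta_apply]
  congr 2
  refine Finset.sum_congr rfl fun z _ => ?_
  by_cases hz : z ∈ bond a
  · rw [h z (Or.inl hz)]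
  · simp only [not_imp_comm.mp mem_bond_of_nablaMinus_ne_zero hz, zero_mul]

theorem dependsOn_ApBeta_apply (a b : Fin n) :
    DependsOn (fun m => ApBeta n m β a b) (bond a ∪ bond b) := by
  intro m m' h
  simp only [ApBeta_apply, h a (Or.inl (Or.inl rfl)), h b (Or.inr (Or.inl rfl))]

theorem measurable_ArBeta_apply (a b : Fin (n - 1)) :
    Measurable fun m => ArBeta n m β a b := by
  simp only [ArBeta_apply]
  fun_prop

theorem measurable_ApBeta_apply (a b : Fin n) :
    Measurable fun m => ApBeta n m β a b := by
  simp only [ApBeta_apply]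
  fun_prop

theorem dependsOn_ArBeta_pow_apply (k : ℕ) (a b : Fin (n - 1)) :
    DependsOn (fun m => (ArBeta n m β ^ k) a b) (⋃ c ∈ walkSites k a b, bond c) :=
  dependsOn_pow_apply _ (ArBeta_isTridiagonal β) (dependsOn_ArBeta_apply β) k a b

theorem dependsOn_ApBeta_pow_apply (k : ℕ) (a b : Fin n) :
    DependsOn (fun m => (ApBeta n m β ^ k) a b) (⋃ c ∈ walkSites k a b, bond c) :=
  dependsOn_pow_apply _ (ApBeta_isTridiagonal β) (dependsOn_ApBeta_apply β) k a b

theorem disjoint_biUnion_bond_walkSites {N N' k k' : ℕ} {x : Fin N} {y : Fin N'}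
    (hgap : (k : ℤ) + (k' : ℤ) < 2 * |(x : ℤ) - (y : ℤ)| - 2) :
    Disjoint (⋃ c ∈ walkSites k x x, bond (n := n) c) (⋃ d ∈ walkSites k' y y, bond d) := by
  simp only [Set.disjoint_left, Set.mem_iUnion, not_exists]
  rintro z ⟨c, hc, hzc⟩ d hd hzd
  simp only [mem_walkSites, bond, Nat.dist, Set.mem_ofPred_eq] at hc hd hzc hzd
  rw [Int.abs_eq_natAbs] at hgap
  omega

end Chain

open Matrix MeasureTheory ProbabilityTheory in
theorem stmt3_general {Ω : Type*} [MeasurableSpace Ω] (μ : Measure Ω)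
    (mass : ℕ → Ω → ℝ) (hmeas : ∀ i, Measurable (mass i))
    (hindep : iIndepFun mass μ)
    (n : ℕ) (β : Fin n → ℝ) (k k' : ℕ) :
    (∀ x y : Fin (n-1), (k : ℤ) + (k' : ℤ) < 2 * |(x : ℤ) - (y : ℤ)| - 2 →
      ∫ ω, (((ArBeta n (fun z => mass z ω) β) ^ k) x x)
          * (((ArBeta n (fun z => mass z ω) β) ^ k') y y) ∂μ
        = (∫ ω, ((ArBeta n (fun z => mass z ω) β) ^ k) x x ∂μ)
          * (∫ ω, ((ArBeta n (fun z => mass z ω) β) ^ k') y y ∂μ)) ∧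
    (∀ (x : Fin n) (y : Fin (n-1)), (k : ℤ) + (k' : ℤ) < 2 * |(x : ℤ) - (y : ℤ)| - 2 →
      ∫ ω, (((ApBeta n (fun z => mass z ω) β) ^ k) x x)
          * (((ArBeta n (fun z => mass z ω) β) ^ k') y y) ∂μ
        = (∫ ω, ((ApBeta n (fun z => mass z ω) β) ^ k) x x ∂μ)
          * (∫ ω, ((ArBeta n (fun z => mass z ω) β) ^ k') y y ∂μ)) := by
  have hX : iIndepFun (fun z : Fin n => mass z) μ := hindep.precomp Fin.val_injective
  refine ⟨fun x y hgap => ?_, fun x y hgap => ?_⟩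
  · exact integral_mul_eq_mul_integral_of_dependsOn (fun z : Fin n => hmeas z) hX
      (measurable_pow_apply (measurable_ArBeta_apply β) k x x)
      (measurable_pow_apply (measurable_ArBeta_apply β) k' y y)
      (disjoint_biUnion_bond_walkSites hgap)
      (dependsOn_ArBeta_pow_apply β k x x) (dependsOn_ArBeta_pow_apply β k' y y)
  · exact integral_mul_eq_mul_integral_of_dependsOn (fun z : Fin n => hmeas z) hX
      (measurable_pow_apply (measurable_ApBeta_apply β) k x x)
      (measurable_pow_apply (measurable_ArBeta_apply β) k' y y)
      (disjoint_biUnion_bond_walkSites hgap)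
      (dependsOn_ApBeta_pow_apply β k x x) (dependsOn_ArBeta_pow_apply β k' y y)

open Matrix MeasureTheory ProbabilityTheory in
/-- for i.i.d. masses and `k + k' < 2|x − y| − 2`, the covariances of the
diagonal entries of powers of `A_r^β` (resp. of `A_p^β` against `A_r^β`) vanish. -/
theorem stmt3 {Ω : Type*} [MeasurableSpace Ω] (μ : Measure Ω) [IsProbabilityMeasure μ]
    (mass : ℕ → Ω → ℝ) (hmeas : ∀ i, Measurable (mass i))
    (hindep : iIndepFun mass μ)
    (hident : ∀ i j, IdentDistrib (mass i) (mass j) μ μ)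
    (mmin mmax : ℝ) (h0 : 0 < mmin) (hmm : mmin ≤ mmax)
    (hrange : ∀ i ω, mass i ω ∈ Set.Icc mmin mmax)
    (n : ℕ) (hn : 2 ≤ n) (β : Fin n → ℝ) (hβ : ∀ x, 0 < β x) (k k' : ℕ) :
    (∀ x y : Fin (n-1), (k : ℤ) + (k' : ℤ) < 2 * |(x : ℤ) - (y : ℤ)| - 2 →
      ∫ ω, (((ArBeta n (fun z => mass z ω) β) ^ k) x x)
          * (((ArBeta n (fun z => mass z ω) β) ^ k') y y) ∂μ
        = (∫ ω, ((ArBeta n (fun z => mass z ω) β) ^ k) x x ∂μ)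
          * (∫ ω, ((ArBeta n (fun z => mass z ω) β) ^ k') y y ∂μ)) ∧
    (∀ (x : Fin n) (y : Fin (n-1)), (k : ℤ) + (k' : ℤ) < 2 * |(x : ℤ) - (y : ℤ)| - 2 →
      ∫ ω, (((ApBeta n (fun z => mass z ω) β) ^ k) x x)
          * (((ArBeta n (fun z => mass z ω) β) ^ k') y y) ∂μ
        = (∫ ω, ((ApBeta n (fun z => mass z ω) β) ^ k) x x ∂μ)
          * (∫ ω, ((ArBeta n (fun z => mass z ω) β) ^ k') y y ∂μ)) :=
  stmt3_general μ mass hmeas hindep n β k k'
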